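/- arXiv:2303.01462 — 4 statements merged into one kernel-verified Lean document; each statement's English description precedes it below -/
import Mathlib

section
/- Let x_1,...,x_n be vectors in R^d with R_min^2 = min_i ||x_i||^2, R_max^2 = max_i ||x_i||^2, R^2 = R_max^2/R_min^2, and suppose the data is p-orthogonal for some p ≥ 3, i.e. R_min^2 ≥ p R^2 n max_{i≠j} |⟨x_i, x_j⟩|. Suppose ŵ = Σ_i λ_i y_i x_i with all λ_i ≥ 0, y_i ⟨ŵ, x_i⟩ ≥ 1 for all i, and λ_i = 0 whenever y_i ⟨ŵ, x_i⟩ ≠ 1 (KKT conditions for linear max-margin). Then for all i, λ_i ≤ 1/(R_min^2 (1 - 1/(p R^2))). -/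
set_option maxHeartbeats 800000


open RealInnerProductSpace

theorem stmt_0 {d n : ℕ} (x : Fin n → EuclideanSpace ℝ (Fin d)) (y : Fin n → ℝ)
    (hy : ∀ i, y i = 1 ∨ y i = -1)
    (Rmin2 Rmax2 R2 p : ℝ)
    (hRminUB : ∀ i, Rmin2 ≤ ‖x i‖ ^ 2) (hRminEx : ∃ i, ‖x i‖ ^ 2 = Rmin2)
    (hRmaxLB : ∀ i, ‖x i‖ ^ 2 ≤ Rmax2) (hRmaxEx : ∃ i, ‖x i‖ ^ 2 = Rmax2)
    (hR2 : R2 = Rmax2 / Rmin2)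
    (hp : 3 ≤ p)
    (horth : ∀ i j, i ≠ j → p * R2 * n * |⟪x i, x j⟫| ≤ Rmin2)
    (lam : Fin n → ℝ) (hlam : ∀ i, 0 ≤ lam i)
    (w : EuclideanSpace ℝ (Fin d)) (hw : w = ∑ i, lam i • (y i • x i))
    (hmargin : ∀ i, 1 ≤ y i * ⟪w, x i⟫)
    (hcomp : ∀ i, y i * ⟪w, x i⟫ ≠ 1 → lam i = 0) :
    ∀ i, lam i ≤ 1 / (Rmin2 * (1 - 1 / (p * R2))) := by
  intro i
  obtain ⟨i0, hi0⟩ := hRminEx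
  have hx0 : x i0 ≠ 0 := by
    intro h
    have := hmargin i0
    rw [h, inner_zero_right, mul_zero] at this
    linarith
  have hRmin_pos : 0 < Rmin2 := by
    rw [← hi0]
    exact pow_pos (norm_pos_iff.mpr hx0) 2
  have hRmax : Rmin2 ≤ Rmax2 := hi0 ▸ hRmaxLB i0
  have hR2ge1 : 1 ≤ R2 := by rw [hR2]; exact (one_le_div hRmin_pos).mpr hRmax
  have hpR2 : 3 ≤ p * R2 := by nlinarith
  have hpR2pos : 0 < p * R2 := by linarith
  have hfac : 0 < 1 - 1 / (p * R2) := by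
    have h1 : 1 / (p * R2) ≤ 1 / 3 := by
      apply one_div_le_one_div_of_le <;> linarith
    linarith
  have hden : 0 < Rmin2 * (1 - 1 / (p * R2)) := mul_pos hRmin_pos hfac
  have hn : 0 < (n : ℝ) := by exact_mod_cast i.pos
  -- pick the index with maximal lambda
  obtain ⟨k, -, hk⟩ := Finset.exists_max_image Finset.univ lam ⟨i, Finset.mem_univ i⟩
  have hki : lam i ≤ lam k := hk i (Finset.mem_univ i)
  suffices h : lam k ≤ 1 / (Rmin2 * (1 - 1 / (p * R2))) by linarith
  rcases eq_or_lt_of_le (hlam k) with h0 | hkpos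
  · rw [← h0]; positivity
  have heq : y k * ⟪w, x k⟫ = 1 := by
    by_contra h
    have := hcomp k h
    linarith
  have hinner : ⟪w, x k⟫ = ∑ j, lam j * (y j * ⟪x j, x k⟫) := by
    rw [hw, sum_inner]
    refine Finset.sum_congr rfl fun j _ => ?_
    rw [real_inner_smul_left, real_inner_smul_left]
  have hyk2 : y k * y k = 1 := by rcases hy k with h | h <;> rw [h] <;> ring
  have key : 1 = lam k * ‖x k‖ ^ 2
      + ∑ j ∈ Finset.univ.erase k, lam j * (y k * y j * ⟪x j, x k⟫) := by
    calc 1 = y k * ⟪w, x k⟫ := heq.symm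
    _ = ∑ j, lam j * (y k * y j * ⟪x j, x k⟫) := by
        rw [hinner, Finset.mul_sum]
        exact Finset.sum_congr rfl fun j _ => by ring
    _ = lam k * (y k * y k * ⟪x k, x k⟫)
        + ∑ j ∈ Finset.univ.erase k, lam j * (y k * y j * ⟪x j, x k⟫) :=
        (Finset.add_sum_erase _ _ (Finset.mem_univ k)).symm
    _ = lam k * ‖x k‖ ^ 2
        + ∑ j ∈ Finset.univ.erase k, lam j * (y k * y j * ⟪x j, x k⟫) := by
        rw [hyk2, one_mul, real_inner_self_eq_norm_sq]
  set c : ℝ := lam k * (Rmin2 / (p * R2 * n)) with hc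
  have hcnn : 0 ≤ c := by positivity
  have hterm : ∀ j ∈ Finset.univ.erase k,
      |lam j * (y k * y j * ⟪x j, x k⟫)| ≤ c := by
    intro j hj
    have hjk : j ≠ k := (Finset.mem_erase.mp hj).1
    have ho := horth j k hjk
    have hinn : |⟪x j, x k⟫| ≤ Rmin2 / (p * R2 * n) := by
      rw [le_div_iff₀ (by positivity)]
      linarith [ho]
    have hyj : |y j| = 1 := by rcases hy j with h | h <;> rw [h] <;> norm_num
    have hyk : |y k| = 1 := by rcases hy k with h | h <;> rw [h] <;> norm_num
    rw [abs_mul, abs_mul, abs_mul, hyj, hyk, abs_of_nonneg (hlam j)]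
    have h1 : lam j * (1 * 1 * |⟪x j, x k⟫|) ≤ lam k * (Rmin2 / (p * R2 * n)) := by
      have := hk j (Finset.mem_univ j)
      have habs : (0:ℝ) ≤ |⟪x j, x k⟫| := abs_nonneg _
      nlinarith [hlam j]
    simpa using h1
  have hSabs : |∑ j ∈ Finset.univ.erase k, lam j * (y k * y j * ⟪x j, x k⟫)|
      ≤ lam k * (Rmin2 / (p * R2)) := by
    calc |∑ j ∈ Finset.univ.erase k, lam j * (y k * y j * ⟪x j, x k⟫)|
        ≤ ∑ j ∈ Finset.univ.erase k, |lam j * (y k * y j * ⟪x j, x k⟫)| :=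
          Finset.abs_sum_le_sum_abs _ _
    _ ≤ (Finset.univ.erase k).card • c := Finset.sum_le_card_nsmul _ _ _ hterm
    _ = ((Finset.univ.erase k).card : ℝ) * c := by rw [nsmul_eq_mul]
    _ ≤ (n : ℝ) * c := by
        apply mul_le_mul_of_nonneg_right _ hcnn
        have : (Finset.univ.erase k).card ≤ n := by
          simpa using Finset.card_erase_le.trans (le_of_eq (by simp))
        exact_mod_cast this
    _ = lam k * (Rmin2 / (p * R2)) := by
        rw [hc]; field_simp
  have hnorm : Rmin2 ≤ ‖x k‖ ^ 2 := hRminUB k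
  have hstep : lam k * Rmin2 * (1 - 1 / (p * R2)) ≤ 1 := by
    have hS := abs_le.mp hSabs
    have h1 : lam k * Rmin2 ≤ lam k * ‖x k‖ ^ 2 :=
      mul_le_mul_of_nonneg_left hnorm (le_of_lt hkpos)
    have h2 : lam k * Rmin2 * (1 / (p * R2)) = lam k * (Rmin2 / (p * R2)) := by
      field_simp
    nlinarith [hS.1, hS.2]
  rw [le_div_iff₀ hden, ← mul_assoc]
  exact hstep
end

section
/- Under the same setting as above (p-orthogonal training data with p ≥ 3 and ŵ = Σ_i λ_i y_i x_i satisfying the KKT conditions for linear margin maximization), for all i ∈ [n], λ_i ≥ (1/R_max^2)(1 - 1/(p R^2 - 1)). -/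
open RealInnerProductSpace

theorem stmt_1 {d n : ℕ} (x : Fin n → EuclideanSpace ℝ (Fin d)) (y : Fin n → ℝ)
    (hy : ∀ i, y i = 1 ∨ y i = -1)
    (Rmin2 Rmax2 R2 p : ℝ)
    (hRminUB : ∀ i, Rmin2 ≤ ‖x i‖ ^ 2) (hRminEx : ∃ i, ‖x i‖ ^ 2 = Rmin2)
    (hRmaxLB : ∀ i, ‖x i‖ ^ 2 ≤ Rmax2) (hRmaxEx : ∃ i, ‖x i‖ ^ 2 = Rmax2)
    (hR2 : R2 = Rmax2 / Rmin2)
    (hp : 3 ≤ p)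
    (horth : ∀ i j, i ≠ j → p * R2 * n * |⟪x i, x j⟫| ≤ Rmin2)
    (lam : Fin n → ℝ) (hlam : ∀ i, 0 ≤ lam i)
    (w : EuclideanSpace ℝ (Fin d)) (hw : w = ∑ i, lam i • (y i • x i))
    (hmargin : ∀ i, 1 ≤ y i * ⟪w, x i⟫)
    (hcomp : ∀ i, y i * ⟪w, x i⟫ ≠ 1 → lam i = 0) :
    ∀ i, (1 / Rmax2) * (1 - 1 / (p * R2 - 1)) ≤ lam i := by
  intro i
  have hn : 0 < n := i.pos
  have hnR : (0:ℝ) < n := by exact_mod_cast hn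
  have hRmin_pos : 0 < Rmin2 := by
    by_contra h
    push_neg at h
    obtain ⟨i0, hi0⟩ := hRminEx
    have hx0 : x i0 = 0 := by
      have h1 : ‖x i0‖ ^ 2 ≤ 0 := hi0.le.trans h
      have h2 : ‖x i0‖ = 0 := by nlinarith [norm_nonneg (x i0)]
      simpa using h2
    have hm := hmargin i0
    rw [hx0] at hm
    simp at hm
    linarith
  have hRmax_pos : 0 < Rmax2 := lt_of_lt_of_le hRmin_pos ((hRminUB i).trans (hRmaxLB i))
  have hR2_ge : 1 ≤ R2 := by
    rw [hR2, le_div_iff₀ hRmin_pos]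
    simpa using (hRminUB i).trans (hRmaxLB i)
  have hpR2 : 3 ≤ p * R2 := by nlinarith
  have hden : 0 < p * R2 - 1 := by linarith
  have hpR2pos : 0 < p * R2 := by linarith
  have hy2 : ∀ k, y k ^ 2 = 1 := by
    intro k; rcases hy k with h | h <;> rw [h] <;> norm_num
  have hyabs : ∀ k, |y k| = 1 := by
    intro k; rcases hy k with h | h <;> rw [h] <;> norm_num
  -- expansion of the inner product
  have hip : ∀ k, y k * ⟪w, x k⟫ = ∑ j, y k * (lam j * (y j * ⟪x j, x k⟫)) := by
    intro k
    rw [hw, sum_inner, Finset.mul_sum]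
    apply Finset.sum_congr rfl
    intro j _
    rw [real_inner_smul_left, real_inner_smul_left]
  have hexp : ∀ k, y k * ⟪w, x k⟫ = lam k * ‖x k‖ ^ 2
      + ∑ j ∈ Finset.univ.erase k, y k * (lam j * (y j * ⟪x j, x k⟫)) := by
    intro k
    rw [hip k, ← Finset.add_sum_erase _ _ (Finset.mem_univ k)]
    congr 1
    rw [real_inner_self_eq_norm_sq]
    rcases hy k with h | h <;> rw [h] <;> ring
  -- maximizer of lam
  obtain ⟨j0, -, hj0⟩ := Finset.exists_max_image Finset.univ lam ⟨i, Finset.mem_univ i⟩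
  have hj0' : ∀ j, lam j ≤ lam j0 := fun j => hj0 j (Finset.mem_univ j)
  -- bound on cross terms
  have hT : ∀ k, |∑ j ∈ Finset.univ.erase k, y k * (lam j * (y j * ⟪x j, x k⟫))|
      ≤ lam j0 * (Rmin2 / (p * R2)) := by
    intro k
    calc |∑ j ∈ Finset.univ.erase k, y k * (lam j * (y j * ⟪x j, x k⟫))|
        ≤ ∑ j ∈ Finset.univ.erase k, |y k * (lam j * (y j * ⟪x j, x k⟫))| :=
          Finset.abs_sum_le_sum_abs _ _
      _ ≤ ∑ j ∈ Finset.univ.erase k, lam j0 * (Rmin2 / (p * R2 * n)) := by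
          apply Finset.sum_le_sum
          intro j hj
          have hjk : j ≠ k := Finset.ne_of_mem_erase hj
          have horth' : |⟪x j, x k⟫| ≤ Rmin2 / (p * R2 * n) := by
            rw [le_div_iff₀ (by positivity)]
            linarith [horth j k hjk]
          have : |y k * (lam j * (y j * ⟪x j, x k⟫))|
              = lam j * |⟪x j, x k⟫| := by
            rw [abs_mul, abs_mul, abs_mul, hyabs j, hyabs k, abs_of_nonneg (hlam j)]
            ring
          rw [this]
          have h1 : lam j * |⟪x j, x k⟫| ≤ lam j0 * |⟪x j, x k⟫| :=
            mul_le_mul_of_nonneg_right (hj0' j) (abs_nonneg _)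
          have h2 : lam j0 * |⟪x j, x k⟫| ≤ lam j0 * (Rmin2 / (p * R2 * n)) :=
            mul_le_mul_of_nonneg_left horth' ((hlam i).trans (hj0' i))
          linarith
      _ ≤ lam j0 * (Rmin2 / (p * R2)) := by
          rw [Finset.sum_const, nsmul_eq_mul]
          have hcard : ((Finset.univ.erase k).card : ℝ) ≤ n := by
            have := Finset.card_erase_le (s := (Finset.univ : Finset (Fin n))) (a := k)
            simp only [Finset.card_univ, Fintype.card_fin] at this
            exact_mod_cast this
          have hnonneg : 0 ≤ lam j0 * (Rmin2 / (p * R2 * n)) :=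
            mul_nonneg ((hlam i).trans (hj0' i)) (by positivity)
          have : ((Finset.univ.erase k).card : ℝ) * (lam j0 * (Rmin2 / (p * R2 * n)))
              ≤ n * (lam j0 * (Rmin2 / (p * R2 * n))) :=
            mul_le_mul_of_nonneg_right hcard hnonneg
          calc ((Finset.univ.erase k).card : ℝ) * (lam j0 * (Rmin2 / (p * R2 * n)))
              ≤ n * (lam j0 * (Rmin2 / (p * R2 * n))) := this
            _ = lam j0 * (Rmin2 / (p * R2)) := by
                field_simp
  have hlam0 : 0 ≤ lam j0 := hlam j0
  -- key bound: lam j0 * Rmin2 / (p*R2) ≤ 1 / (p*R2 - 1)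
  have hkey : lam j0 * (Rmin2 / (p * R2)) ≤ 1 / (p * R2 - 1) := by
    rcases eq_or_lt_of_le hlam0 with h0 | h0
    · rw [← h0, zero_mul]
      positivity
    · -- lam j0 > 0, so complementarity gives margin = 1 at j0
      have hm1 : y j0 * ⟪w, x j0⟫ = 1 := by
        by_contra hne
        exact absurd (hcomp j0 hne) (by linarith)
      have hE := hexp j0
      rw [hm1] at hE
      have hTj := hT j0
      have hnorm : Rmin2 ≤ ‖x j0‖ ^ 2 := hRminUB j0
      -- 1 ≥ lam j0 * Rmin2 - lam j0 * Rmin2/(p*R2)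
      have h1 : lam j0 * Rmin2 - lam j0 * (Rmin2 / (p * R2)) ≤ 1 := by
        have habs := abs_le.mp hTj
        nlinarith [habs.1]
      -- rearrange
      have hv : lam j0 * Rmin2 = lam j0 * (Rmin2 / (p * R2)) * (p * R2) := by
        field_simp
      rw [hv] at h1
      rw [le_div_iff₀ hden]
      ring_nf at h1 ⊢
      linarith
  -- now use margin at i
  have hEi := hexp i
  have hmi := hmargin i
  have hTi := hT i
  have habs := (abs_le.mp hTi).2
  have hxi : ‖x i‖ ^ 2 ≤ Rmax2 := hRmaxLB i
  have hstep : 1 ≤ lam i * Rmax2 + 1 / (p * R2 - 1) := by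
    nlinarith [hlam i, (abs_le.mp hTi).2]
  rw [div_mul_eq_mul_div, div_le_iff₀ hRmax_pos]
  nlinarith [hstep]
end

section
/- Suppose training data {(x_i,y_i)}_{i=1}^n ⊂ R^d × {±1} is p-orthogonal for p ≥ 3 and let ŵ be the max-margin linear classifier, i.e. the KKT point ŵ = Σ_i λ_i y_i x_i with λ_i ≥ 0, y_i⟨ŵ,x_i⟩ ≥ 1, and λ_i = 0 if y_i⟨ŵ,x_i⟩ ≠ 1. Then (max_i λ_i)/(min_i λ_i) ≤ R^2 (1 + 2/(p R^2 - 2)), where R^2 = max_i ||x_i||^2 / min_i ||x_i||^2. In particular ŵ is τ-uniform with τ = R^2(1 + 2/(pR^2 - 2)). -/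
open RealInnerProductSpace

set_option maxHeartbeats 1000000 in

theorem stmt_2 {d n : ℕ} (x : Fin n → EuclideanSpace ℝ (Fin d)) (y : Fin n → ℝ)
    (hy : ∀ i, y i = 1 ∨ y i = -1)
    (Rmin2 Rmax2 R2 p : ℝ)
    (hRminUB : ∀ i, Rmin2 ≤ ‖x i‖ ^ 2) (hRminEx : ∃ i, ‖x i‖ ^ 2 = Rmin2)
    (hRmaxLB : ∀ i, ‖x i‖ ^ 2 ≤ Rmax2) (hRmaxEx : ∃ i, ‖x i‖ ^ 2 = Rmax2)
    (hR2 : R2 = Rmax2 / Rmin2)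
    (hp : 3 ≤ p)
    (horth : ∀ i j, i ≠ j → p * R2 * n * |⟪x i, x j⟫| ≤ Rmin2)
    (lam : Fin n → ℝ) (hlam : ∀ i, 0 ≤ lam i)
    (w : EuclideanSpace ℝ (Fin d)) (hw : w = ∑ i, lam i • (y i • x i))
    (hmargin : ∀ i, 1 ≤ y i * ⟪w, x i⟫)
    (hcomp : ∀ i, y i * ⟪w, x i⟫ ≠ 1 → lam i = 0) :
    (∀ i, 0 < lam i) ∧
      ∀ i j, lam i ≤ (R2 * (1 + 2 / (p * R2 - 2))) * lam j := by
  -- basic facts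
  obtain ⟨imin, himin⟩ := hRminEx
  obtain ⟨imax, himax⟩ := hRmaxEx
  have hn : 0 < (n : ℝ) := by
    have : 0 < n := Fin.pos imin
    exact_mod_cast this
  have hyabs : ∀ i, |y i| = 1 := by
    intro i; rcases hy i with h | h <;> simp [h]
  have hy2 : ∀ i, y i * y i = 1 := by
    intro i; rcases hy i with h | h <;> simp [h] <;> ring
  have hRmin_pos : 0 < Rmin2 := by
    rcases lt_or_eq_of_le (by positivity : (0:ℝ) ≤ ‖x imin‖ ^ 2) with h | h
    · rwa [himin] at h
    · exfalso
      have hx0 : x imin = 0 := by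
        have : ‖x imin‖ = 0 := by nlinarith [norm_nonneg (x imin)]
        simpa using this
      have h1 : (1:ℝ) ≤ 0 := by simpa [hx0] using hmargin imin
      linarith
  have hRmax_pos : 0 < Rmax2 := lt_of_lt_of_le hRmin_pos (himin ▸ hRmaxLB imin)
  have hR2_ge1 : 1 ≤ R2 := by
    rw [hR2]
    rw [le_div_iff₀ hRmin_pos]
    simpa using himin ▸ hRmaxLB imin
  set A := p * R2 with hA
  have hA3 : 3 ≤ A := by nlinarith
  have hApos : 0 < A := by linarith
  -- orthogonality bound
  set c := Rmin2 / (A * n) with hc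
  have hc_pos : 0 < c := by positivity
  have horth' : ∀ i j, i ≠ j → |⟪x i, x j⟫| ≤ c := by
    intro i j hij
    rw [hc, le_div_iff₀ (by positivity)]
    have := horth i j hij
    nlinarith [abs_nonneg (⟪x i, x j⟫ : ℝ)]
  set S := ∑ j, lam j with hS
  have hS_nonneg : 0 ≤ S := Finset.sum_nonneg fun j _ => hlam j
  -- key expansion
  have hip : ∀ i, y i * ⟪w, x i⟫ = ∑ j, lam j * (y j * y i * ⟪x j, x i⟫) := by
    intro i
    rw [hw, sum_inner, Finset.mul_sum]
    congr 1; ext j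
    rw [real_inner_smul_left, real_inner_smul_left]
    ring
  have hkey : ∀ i, |y i * ⟪w, x i⟫ - lam i * ‖x i‖ ^ 2| ≤ S * c := by
    intro i
    rw [hip i, ← Finset.add_sum_erase Finset.univ _ (Finset.mem_univ i)]
    have hterm : lam i * (y i * y i * ⟪x i, x i⟫) = lam i * ‖x i‖ ^ 2 := by
      rw [hy2 i, real_inner_self_eq_norm_sq]; ring
    rw [hterm, add_sub_cancel_left]
    calc |∑ j ∈ Finset.univ.erase i, lam j * (y j * y i * ⟪x j, x i⟫)|
        ≤ ∑ j ∈ Finset.univ.erase i, |lam j * (y j * y i * ⟪x j, x i⟫)| :=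
          Finset.abs_sum_le_sum_abs _ _
      _ ≤ ∑ j ∈ Finset.univ.erase i, lam j * c := by
          apply Finset.sum_le_sum
          intro j hj
          have hij : j ≠ i := Finset.ne_of_mem_erase hj
          rw [abs_mul, abs_mul, abs_mul, abs_of_nonneg (hlam j), hyabs, hyabs]
          have := horth' j i hij
          nlinarith [hlam j, abs_nonneg (⟪x j, x i⟫ : ℝ)]
      _ ≤ ∑ j, lam j * c := by
          apply Finset.sum_le_sum_of_subset_of_nonneg (Finset.erase_subset _ _)
          intro j _ _; exact mul_nonneg (hlam j) hc_pos.le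
      _ = S * c := by rw [hS, ← Finset.sum_mul]
  -- max lambda
  obtain ⟨i0, -, hi0⟩ := Finset.exists_max_image Finset.univ lam ⟨imin, Finset.mem_univ _⟩
  have hi0' : ∀ j, lam j ≤ lam i0 := fun j => hi0 j (Finset.mem_univ j)
  have hSn : S ≤ n * lam i0 := by
    calc S ≤ ∑ _j : Fin n, lam i0 := Finset.sum_le_sum (fun j _ => hi0' j)
    _ = n * lam i0 := by simp [mul_comm]
  have hi0pos : 0 < lam i0 := by
    rcases lt_or_eq_of_le (hlam i0) with h | h
    · exact h
    · exfalso
      have hall : ∀ j, lam j = 0 := fun j => le_antisymm (h ▸ hi0' j) (hlam j)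
      have hw0 : w = 0 := by rw [hw]; simp [hall]
      have h1 : (1:ℝ) ≤ 0 := by simpa [hw0] using hmargin imin
      linarith
  have hcomp0 : y i0 * ⟪w, x i0⟫ = 1 := by
    by_contra h
    exact absurd (hcomp i0 h) (ne_of_gt hi0pos)
  -- bound on lam i0 via complementarity
  have hnca : (n : ℝ) * c * A = Rmin2 := by
    rw [hc]; field_simp
  have hSc : S * c ≤ 1 / (A - 1) := by
    have h1 : |1 - lam i0 * ‖x i0‖ ^ 2| ≤ S * c := hcomp0 ▸ hkey i0
    have h2 : lam i0 * Rmin2 - 1 ≤ S * c := by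
      have := abs_le.mp h1
      nlinarith [hRminUB i0, hi0pos.le]
    have h3' : S * (c * A) ≤ ((n : ℝ) * lam i0) * (c * A) :=
      mul_le_mul_of_nonneg_right hSn (by positivity)
    have heq : lam i0 * Rmin2 = lam i0 * ((n : ℝ) * c * A) := by rw [hnca]
    rw [le_div_iff₀ (by linarith)]
    nlinarith [h3', heq, h2]
  -- lower bound on every lam i
  have hlo : ∀ i, (A - 2) / ((A - 1) * Rmax2) ≤ lam i := by
    intro i
    have h1 := hkey i
    have h2 := hmargin i
    have h3 := abs_le.mp h1
    have h4 : 1 - S * c ≤ lam i * ‖x i‖ ^ 2 := by linarith [h3.2]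
    have h5 : 1 - 1 / (A - 1) ≤ lam i * Rmax2 := by
      nlinarith [hRmaxLB i, hlam i, hSc]
    rw [div_le_iff₀ (by nlinarith : (0:ℝ) < (A - 1) * Rmax2)]
    have hA1 : A - 1 ≠ 0 := by nlinarith
    have hm : (1 - 1 / (A - 1)) * (A - 1) = A - 2 := by
      field_simp; ring
    have h6 := mul_le_mul_of_nonneg_right h5 (by linarith : (0:ℝ) ≤ A - 1)
    nlinarith [h6, hm]
  have hlo_pos : 0 < (A - 2) / ((A - 1) * Rmax2) := by
    apply div_pos <;> nlinarith
  have hpos : ∀ i, 0 < lam i := fun i => lt_of_lt_of_le hlo_pos (hlo i)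
  refine ⟨hpos, ?_⟩
  -- upper bound on every lam i
  have hhi : ∀ i, lam i ≤ A / ((A - 1) * Rmin2) := by
    intro i
    have hcompi : y i * ⟪w, x i⟫ = 1 := by
      by_contra h
      exact absurd (hcomp i h) (ne_of_gt (hpos i))
    have h1 := hcompi ▸ hkey i
    have h3 := abs_le.mp h1
    have h4 : lam i * Rmin2 ≤ 1 + 1 / (A - 1) := by
      nlinarith [hRminUB i, hlam i, hSc]
    rw [le_div_iff₀ (by nlinarith : (0:ℝ) < (A - 1) * Rmin2)]
    have hA1 : A - 1 ≠ 0 := by nlinarith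
    have hm : (1 + 1 / (A - 1)) * (A - 1) = A := by field_simp; ring
    have h6 := mul_le_mul_of_nonneg_right h4 (by linarith : (0:ℝ) ≤ A - 1)
    nlinarith [h6, hm]
  intro i j
  have hτ : (R2 * (1 + 2 / (p * R2 - 2))) * ((A - 2) / ((A - 1) * Rmax2)) =
      A / ((A - 1) * Rmin2) := by
    rw [← hA, hR2]
    have h1 : A - 1 ≠ 0 := by nlinarith
    have h2 : A - 2 ≠ 0 := by nlinarith
    have h3 : Rmax2 ≠ 0 := ne_of_gt hRmax_pos
    have h4 : Rmin2 ≠ 0 := ne_of_gt hRmin_pos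
    field_simp
    ring
  calc lam i ≤ A / ((A - 1) * Rmin2) := hhi i
  _ = (R2 * (1 + 2 / (p * R2 - 2))) * ((A - 2) / ((A - 1) * Rmax2)) := hτ.symm
  _ ≤ (R2 * (1 + 2 / (p * R2 - 2))) * lam j := by
      apply mul_le_mul_of_nonneg_left (hlo j)
      have hA2 : (0:ℝ) < p * R2 - 2 := by nlinarith [hA3, hA.symm.le, hA.le]
      have hd : 0 < 2 / (p * R2 - 2) := div_pos two_pos hA2
      nlinarith [hR2_ge1, hd]
end

section
/- Let u = Σ_{i=1}^n s_i y_i x_i be τ-uniform w.r.t. training data {(x_i, y_i)}_{i=1}^n ⊂ R^d × {±1} (s_i > 0, max_i s_i / min_i s_i ≤ τ). If the training data satisfies min_k ||x_k||^2 ≥ 2τ n max_{i≠j} |⟨x_i, x_j⟩|, then u interpolates the training data: for every k ∈ [n], ⟨u, y_k x_k⟩ ≥ (1/2) s_k ||x_k||^2 > 0 (assuming all x_k ≠ 0), hence y_k = sign(⟨u, x_k⟩). -/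
open RealInnerProductSpace

/-- sign function: 1 if z > 0, -1 otherwise. -/
noncomputable def sgn (z : ℝ) : ℝ := if 0 < z then 1 else -1

theorem stmt_3 {d n : ℕ} (x : Fin n → EuclideanSpace ℝ (Fin d)) (y : Fin n → ℝ)
    (hy : ∀ i, y i = 1 ∨ y i = -1)
    (τ : ℝ) (hτ1 : 1 ≤ τ)
    (s : Fin n → ℝ) (hs : ∀ i, 0 < s i)
    (hτ : ∀ i j, s i ≤ τ * s j)
    (hxne : ∀ i, x i ≠ 0)
    (horth : ∀ i j, i ≠ j → ∀ k, 2 * τ * n * |⟪x i, x j⟫| ≤ ‖x k‖ ^ 2)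
    (u : EuclideanSpace ℝ (Fin d)) (hu : u = ∑ i, s i • (y i • x i)) :
    ∀ k, (1 / 2) * s k * ‖x k‖ ^ 2 ≤ y k * ⟪u, x k⟫ ∧
      0 < y k * ⟪u, x k⟫ ∧ y k = sgn ⟪u, x k⟫ := by
  intro k
  have hn : (0:ℝ) < n := by exact_mod_cast Fin.pos k
  have hτ0 : (0:ℝ) < τ := by linarith
  have hxk : (0:ℝ) < ‖x k‖ ^ 2 := pow_pos (norm_pos_iff.2 (hxne k)) 2
  have hyk2 : y k * y k = 1 := by rcases hy k with h | h <;> simp [h]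
  have hin : y k * ⟪u, x k⟫ =
      ∑ i, y k * (s i * (y i * ⟪x i, x k⟫)) := by
    rw [hu, sum_inner, Finset.mul_sum]
    congr 1; ext i
    rw [real_inner_smul_left, real_inner_smul_left]
  have hsplit : y k * ⟪u, x k⟫ =
      s k * ‖x k‖ ^ 2 + ∑ i ∈ Finset.univ.erase k, y k * (s i * (y i * ⟪x i, x k⟫)) := by
    rw [hin, ← Finset.add_sum_erase _ _ (Finset.mem_univ k)]
    congr 1
    rw [real_inner_self_eq_norm_sq]
    linear_combination (s k * ‖x k‖ ^ 2) * hyk2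
  set c : ℝ := s k * ‖x k‖ ^ 2 / (2 * n) with hc
  have hterm : ∀ i ∈ Finset.univ.erase k, -c ≤ y k * (s i * (y i * ⟪x i, x k⟫)) := by
    intro i hi
    have hik : i ≠ k := Finset.ne_of_mem_erase hi
    have habs : |y k * (s i * (y i * ⟪x i, x k⟫))| = s i * |⟪x i, x k⟫| := by
      rcases hy k with h | h <;> rcases hy i with h' | h' <;>
        simp [h, h', abs_mul, abs_of_pos (hs i)]
    have h1 : s i * |⟪x i, x k⟫| ≤ τ * s k * |⟪x i, x k⟫| := by
      have := hτ i k
      exact mul_le_mul_of_nonneg_right this (abs_nonneg _)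
    have h2 : 2 * τ * n * |⟪x i, x k⟫| ≤ ‖x k‖ ^ 2 := horth i k hik k
    have h3 : τ * s k * |⟪x i, x k⟫| ≤ c := by
      rw [hc]
      rw [le_div_iff₀ (by positivity)]
      have hsk := (hs k).le
      nlinarith [abs_nonneg (⟪x i, x k⟫ : ℝ)]
    have := (neg_abs_le (y k * (s i * (y i * ⟪x i, x k⟫))))
    have hle : |y k * (s i * (y i * ⟪x i, x k⟫))| ≤ c := by
      rw [habs]; exact h1.trans h3
    linarith
  have hsum : -(((Finset.univ.erase k).card : ℝ) * c) ≤
      ∑ i ∈ Finset.univ.erase k, y k * (s i * (y i * ⟪x i, x k⟫)) := by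
    have := Finset.card_nsmul_le_sum (Finset.univ.erase k) _ (-c) hterm
    simpa [nsmul_eq_mul, mul_neg] using this
  have hcard : ((Finset.univ.erase k).card : ℝ) ≤ n := by
    have : (Finset.univ.erase k).card ≤ n := by
      simpa using (Finset.card_erase_le.trans (by simp))
    exact_mod_cast this
  have hc0 : 0 ≤ c := div_nonneg (mul_nonneg (hs k).le (by positivity)) (by positivity)
  have hmain : (1 / 2) * s k * ‖x k‖ ^ 2 ≤ y k * ⟪u, x k⟫ := by
    rw [hsplit]
    have h4 : ((Finset.univ.erase k).card : ℝ) * c ≤ n * c :=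
      mul_le_mul_of_nonneg_right hcard hc0
    have h5 : (n : ℝ) * c = s k * ‖x k‖ ^ 2 / 2 := by
      field_simp [hc]; rw [hc]; field_simp
    linarith [hsum]
  have hpos : 0 < y k * ⟪u, x k⟫ := by
    have : 0 < (1 / 2) * s k * ‖x k‖ ^ 2 := by nlinarith [hs k, hxk]
    linarith
  refine ⟨hmain, hpos, ?_⟩
  rcases hy k with h | h
  · rw [h] at hpos ⊢
    rw [sgn, if_pos (by linarith)]
  · rw [h] at hpos ⊢
    have : ⟪u, x k⟫ < 0 := by linarith
    rw [sgn, if_neg (by linarith)]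
end
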